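/- arXiv:hep-th/9707040 — 9 statements merged into one kernel-verified Lean document; each statement's English description precedes it below -/
import Mathlib

section
/- The trace of P^n equals N·λ^i if n = iN for some nonnegative integer i, and equals 0 otherwise. -/
theorem trace_pow_of_companion {R : Type*} [CommRing R] (N : ℕ) (hN : 1 ≤ N) (lam : R)
    (P : Matrix (Fin N) (Fin N) R)
    (hP : ∀ i j : Fin N, P i j =
      if (j : ℕ) = (i : ℕ) + 1 then 1
      else if (i : ℕ) = N - 1 ∧ (j : ℕ) = 0 then lam else 0)
    (n : ℕ) :
    (∀ i : ℕ, n = i * N → Matrix.trace (P ^ n) = (N : R) * lam ^ i) ∧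
    ((¬ ∃ i : ℕ, n = i * N) → Matrix.trace (P ^ n) = 0) := by
  have hN' : 0 < N := hN
  have key : ∀ n : ℕ, ∀ i j : Fin N, (P ^ n) i j =
      if (j : ℕ) = ((i : ℕ) + n) % N then lam ^ (((i : ℕ) + n) / N) else 0 := by
    intro n
    induction n with
    | zero =>
      intro i j
      have h1 : ((i : ℕ) + 0) % N = (i : ℕ) := by
        simpa using Nat.mod_eq_of_lt i.isLt
      have h2 : ((i : ℕ) + 0) / N = 0 := by
        simpa using Nat.div_eq_of_lt i.isLt
      rw [h1, h2, pow_zero, pow_zero, Matrix.one_apply]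
      by_cases h : i = j
      · simp [h]
      · have : (j : ℕ) ≠ (i : ℕ) := fun hc => h (Fin.ext hc.symm)
        simp [h, this]
    | succ n ih =>
      intro i j
      rw [pow_succ, Matrix.mul_apply]
      set r : ℕ := ((i : ℕ) + n) % N with hr
      set q : ℕ := ((i : ℕ) + n) / N with hq
      have hrN : r < N := Nat.mod_lt _ hN'
      have hdm : N * q + r = (i : ℕ) + n := Nat.div_add_mod _ _
      set k0 : Fin N := ⟨r, hrN⟩ with hk0
      have hsum : ∑ k, (P ^ n) i k * P k j = (P ^ n) i k0 * P k0 j := by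
        apply Finset.sum_eq_single k0
        · intro k _ hk
          have hkr : (k : ℕ) ≠ r := fun hc => hk (Fin.ext hc)
          rw [ih i k, if_neg hkr, zero_mul]
        · intro h; exact absurd (Finset.mem_univ k0) h
      rw [hsum, ih i k0, if_pos rfl]
      rw [hP k0 j]
      by_cases hcase : r = N - 1
      · -- wrap-around case
        have hx : (i : ℕ) + (n + 1) = N * (q + 1) := by
          rw [Nat.mul_succ]; omega
        have hmod : ((i : ℕ) + (n + 1)) % N = 0 := by
          rw [hx, Nat.mul_mod_right]
        have hdiv : ((i : ℕ) + (n + 1)) / N = q + 1 := by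
          rw [hx, Nat.mul_div_cancel_left _ hN']
        have hne : (j : ℕ) ≠ (k0 : ℕ) + 1 := by
          have := j.isLt; simp only [hk0]; omega
        rw [if_neg hne, hmod, hdiv]
        by_cases hj : (j : ℕ) = 0
        · rw [if_pos ⟨hcase, hj⟩, if_pos hj, pow_succ]
        · rw [if_neg (fun h => hj h.2), if_neg hj, mul_zero]
      · -- no wrap
        have hr1 : r + 1 < N := by omega
        have hx : (i : ℕ) + (n + 1) = (r + 1) + N * q := by omega
        have hmod : ((i : ℕ) + (n + 1)) % N = r + 1 := by
          rw [hx, Nat.add_mul_mod_self_left, Nat.mod_eq_of_lt hr1]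
        have hdiv : ((i : ℕ) + (n + 1)) / N = q := by
          rw [hx, Nat.add_mul_div_left _ _ hN', Nat.div_eq_of_lt hr1, zero_add]
        rw [hmod, hdiv]
        by_cases hj : (j : ℕ) = r + 1
        · rw [if_pos hj, if_pos hj, mul_one]
        · rw [if_neg hj, if_neg hj, if_neg, mul_zero]
          rintro ⟨h1, -⟩
          exact hcase h1
  have htr : Matrix.trace (P ^ n) =
      ∑ i : Fin N, if (i : ℕ) = ((i : ℕ) + n) % N then lam ^ (((i : ℕ) + n) / N) else 0 := by
    simp only [Matrix.trace, Matrix.diag]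
    exact Finset.sum_congr rfl fun i _ => key n i i
  constructor
  · intro m hm
    rw [htr]
    have : ∀ i : Fin N, (if (i : ℕ) = ((i : ℕ) + n) % N then lam ^ (((i : ℕ) + n) / N) else 0)
        = lam ^ m := by
      intro i
      have hmod : ((i : ℕ) + n) % N = (i : ℕ) := by
        rw [hm, Nat.add_mul_mod_self_right, Nat.mod_eq_of_lt i.isLt]
      have hdiv : ((i : ℕ) + n) / N = m := by
        rw [hm, Nat.add_mul_div_right _ _ hN', Nat.div_eq_of_lt i.isLt, zero_add]
      rw [if_pos hmod.symm, hdiv]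
    rw [Finset.sum_congr rfl (fun i _ => this i), Finset.sum_const, Finset.card_univ,
      Fintype.card_fin, nsmul_eq_mul]
  · intro hno
    rw [htr]
    apply Finset.sum_eq_zero
    intro i _
    rw [if_neg]
    intro hc
    have hdm : N * (((i : ℕ) + n) / N) + ((i : ℕ) + n) % N = (i : ℕ) + n :=
      Nat.div_add_mod _ _
    rw [Nat.mul_comm] at hdm
    exact hno ⟨((i : ℕ) + n) / N, by omega⟩
end

section
/- The trace of Π·P^n equals λ^i if n = iN + N − 1 for some nonnegative integer i, and equals 0 otherwise. -/
theorem trace_Pi_mul_pow_of_companion {R : Type*} [CommRing R] (N : ℕ) (hN : 1 ≤ N) (lam : R)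
    (P Pi : Matrix (Fin N) (Fin N) R)
    (hP : ∀ i j : Fin N, P i j =
      if (j : ℕ) = (i : ℕ) + 1 then 1
      else if (i : ℕ) = N - 1 ∧ (j : ℕ) = 0 then lam else 0)
    (hPi : ∀ i j : Fin N, Pi i j =
      if (i : ℕ) = N - 1 ∧ (j : ℕ) = 0 then 1 else 0)
    (n : ℕ) :
    (∀ i : ℕ, n = i * N + (N - 1) → Matrix.trace (Pi * P ^ n) = lam ^ i) ∧
    ((¬ ∃ i : ℕ, n = i * N + (N - 1)) → Matrix.trace (Pi * P ^ n) = 0) := by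
  have hNpos : 0 < N := hN
  have mod1 : ∀ q r : ℕ, r + 1 < N → (N * q + r + 1) % N = r + 1 := by
    intro q r h
    rw [show N * q + r + 1 = (r + 1) + q * N by ring, Nat.add_mul_mod_self_right,
      Nat.mod_eq_of_lt h]
  have div1 : ∀ q r : ℕ, r + 1 < N → (N * q + r + 1) / N = q := by
    intro q r h
    rw [show N * q + r + 1 = (r + 1) + q * N by ring, Nat.add_mul_div_right _ _ hNpos,
      Nat.div_eq_of_lt h, Nat.zero_add]
  have key : ∀ m : ℕ, ∀ i j : Fin N, (P ^ m) i j =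
      if ((i : ℕ) + m) % N = (j : ℕ) then lam ^ (((i : ℕ) + m) / N) else 0 := by
    intro m
    induction m with
    | zero =>
      intro i j
      simp only [pow_zero, Matrix.one_apply, Nat.add_zero, Nat.mod_eq_of_lt i.isLt,
        Nat.div_eq_of_lt i.isLt, pow_zero]
      simp [Fin.ext_iff, eq_comm]
    | succ m ih =>
      intro i j
      rw [pow_succ, Matrix.mul_apply]
      have hk0lt : ((i : ℕ) + m) % N < N := Nat.mod_lt _ hNpos
      rw [Finset.sum_eq_single (⟨((i : ℕ) + m) % N, hk0lt⟩ : Fin N)]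
      · rw [ih, hP]
        have hval : ((⟨((i : ℕ) + m) % N, hk0lt⟩ : Fin N) : ℕ) = ((i : ℕ) + m) % N := rfl
        rw [hval, if_pos rfl]
        have hjlt : (j : ℕ) < N := j.isLt
        have hx := Nat.div_add_mod ((i : ℕ) + m) N
        generalize hr : ((i : ℕ) + m) % N = r at *
        generalize hq : ((i : ℕ) + m) / N = q at *
        have h1 : (i : ℕ) + (m + 1) = N * q + r + 1 := by omega
        rw [h1]
        rcases Nat.lt_or_ge (r + 1) N with hcase | hcase
        · rw [mod1 q r hcase, div1 q r hcase]
          split_ifs <;> first | omega | ring1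
        · have hrN : r = N - 1 := by omega
          subst hrN
          have e : N * q + (N - 1) + 1 = N * (q + 1) := by
            have : N * (q + 1) = N * q + N := by ring
            omega
          rw [e, Nat.mul_mod_right, Nat.mul_div_cancel_left _ hNpos]
          split_ifs <;> first | omega | ring1
      · intro b _ hb
        rw [ih, if_neg, zero_mul]
        intro hcontra
        exact hb (Fin.ext hcontra.symm)
      · intro h; exact absurd (Finset.mem_univ _) h
  have hlastlt : N - 1 < N := by omega
  have h0lt : 0 < N := hNpos
  have htr : Matrix.trace (Pi * P ^ n) = (P ^ n) ⟨0, h0lt⟩ ⟨N - 1, hlastlt⟩ := by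
    rw [Matrix.trace]
    rw [Finset.sum_eq_single (⟨N - 1, hlastlt⟩ : Fin N)]
    · rw [Matrix.diag_apply, Matrix.mul_apply]
      rw [Finset.sum_eq_single (⟨0, h0lt⟩ : Fin N)]
      · rw [hPi]; simp
      · intro b _ hb
        rw [hPi, if_neg, zero_mul]
        intro ⟨h1, h2⟩
        exact hb (Fin.ext h2)
      · intro h; exact absurd (Finset.mem_univ _) h
    · intro b _ hb
      rw [Matrix.diag_apply, Matrix.mul_apply]
      apply Finset.sum_eq_zero
      intro c _
      rw [hPi, if_neg, zero_mul]
      intro ⟨h1, h2⟩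
      exact hb (Fin.ext (by simpa using h1))
    · intro h; exact absurd (Finset.mem_univ _) h
  have hfinal : Matrix.trace (Pi * P ^ n) =
      if n % N = N - 1 then lam ^ (n / N) else 0 := by
    rw [htr, key]
    simp only [Nat.zero_add]
  constructor
  · intro i hi
    rw [hfinal]
    have hmod : n % N = N - 1 := by
      rw [hi, Nat.mul_comm, Nat.mul_add_mod, Nat.mod_eq_of_lt hlastlt]
    have hdiv : n / N = i := by
      rw [hi, Nat.mul_comm, Nat.mul_add_div hNpos, Nat.div_eq_of_lt hlastlt, Nat.add_zero]
    rw [if_pos hmod, hdiv]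
  · intro hne
    rw [hfinal, if_neg]
    intro hmod
    have hdm := Nat.div_add_mod n N
    have hc : n / N * N = N * (n / N) := Nat.mul_comm _ _
    exact hne ⟨n / N, by omega⟩
end

section
/- Let M = μ̃ − P where μ̃ = diag(μ_1,…,μ_N). Then for 1 ≤ n ≤ N−1 one has tr(M^n) = Σ_{j=1}^N μ_j^n, i.e. the traces of the first N−1 powers of M agree with those of the diagonal part alone. -/
section Aux

variable {R : Type*} [CommRing R] {N : ℕ} (lam : R) (mu : Fin N → R)
  (P : Matrix (Fin N) (Fin N) R)

lemma aux_zero (hN2 : 2 ≤ N)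
    (hP : ∀ i j : Fin N, P i j =
      if (j : ℕ) = (i : ℕ) + 1 then 1
      else if (i : ℕ) = N - 1 ∧ (j : ℕ) = 0 then lam else 0) :
    ∀ n, n ≤ N - 1 → ∀ i j : Fin N,
      (∀ k ≤ n, (j:ℕ) ≠ (i:ℕ) + k ∧ (j:ℕ) + N ≠ (i:ℕ) + k) →
      ((Matrix.diagonal mu - P) ^ n) i j = 0 := by
  intro n
  induction n with
  | zero =>
    intro _ i j h
    have h0 := (h 0 le_rfl).1
    have hij : j ≠ i := by
      intro he; apply h0; rw [he]; omega
    simp [pow_zero, Matrix.one_apply, Ne.symm hij]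
  | succ n ih =>
    intro hn i j h
    rw [pow_succ, Matrix.mul_apply]
    apply Finset.sum_eq_zero
    intro l _
    rcases eq_or_ne ((Matrix.diagonal mu - P) l j) 0 with h0 | h0
    · rw [h0, mul_zero]
    · have hlj : j = l ∨ (j:ℕ) = (l:ℕ) + 1 ∨ ((l:ℕ) = N - 1 ∧ (j:ℕ) = 0) := by
        by_contra hc
        push_neg at hc
        obtain ⟨hc1, hc2, hc3⟩ := hc
        apply h0
        rw [Matrix.sub_apply, Matrix.diagonal_apply, hP]
        rw [if_neg (Ne.symm hc1), if_neg hc2, if_neg (by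
          intro hh; exact hc3 hh.1 hh.2)]
        ring
      have hil : (i:ℕ) < N := i.isLt
      have hjl : (j:ℕ) < N := j.isLt
      have hll : (l:ℕ) < N := l.isLt
      have hzero : ((Matrix.diagonal mu - P) ^ n) i l = 0 := by
        apply ih (by omega)
        intro k hk
        rcases hlj with rfl | hlj | ⟨h1, h2⟩
        · exact h k (by omega)
        · constructor
          · intro he
            exact (h (k+1) (by omega)).1 (by omega)
          · intro he
            exact (h (k+1) (by omega)).2 (by omega)
        · constructor
          · intro he
            exact (h (k+1) (by omega)).2 (by omega)
          · omega
      rw [hzero, zero_mul]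

lemma aux_diag (hN2 : 2 ≤ N)
    (hP : ∀ i j : Fin N, P i j =
      if (j : ℕ) = (i : ℕ) + 1 then 1
      else if (i : ℕ) = N - 1 ∧ (j : ℕ) = 0 then lam else 0) :
    ∀ n, n ≤ N - 1 → ∀ i : Fin N,
      ((Matrix.diagonal mu - P) ^ n) i i = mu i ^ n := by
  intro n
  induction n with
  | zero => intro _ i; simp [Matrix.one_apply]
  | succ n ih =>
    intro hn i
    rw [pow_succ, Matrix.mul_apply]
    have hAii : (Matrix.diagonal mu - P) i i = mu i := by
      rw [Matrix.sub_apply, Matrix.diagonal_apply_eq, hP]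
      have hil : (i:ℕ) < N := i.isLt
      rw [if_neg (by omega), if_neg (by omega)]
      ring
    rw [Finset.sum_eq_single i]
    · rw [ih (by omega) i, hAii]; ring
    · intro l _ hl
      have hil : (i:ℕ) < N := i.isLt
      have hll : (l:ℕ) < N := l.isLt
      have hln : (l:ℕ) ≠ (i:ℕ) := by
        intro he; exact hl (Fin.ext he)
      rcases eq_or_ne ((Matrix.diagonal mu - P) l i) 0 with h0 | h0
      · rw [h0, mul_zero]
      · have hli : (i:ℕ) = (l:ℕ) + 1 ∨ ((l:ℕ) = N - 1 ∧ (i:ℕ) = 0) := by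
          by_contra hc
          push_neg at hc
          obtain ⟨hc2, hc3⟩ := hc
          apply h0
          rw [Matrix.sub_apply, Matrix.diagonal_apply, hP]
          rw [if_neg (by intro he; exact hln (congrArg Fin.val he)),
            if_neg hc2, if_neg (by intro hh; exact hc3 hh.1 hh.2)]
          ring
        have hzero : ((Matrix.diagonal mu - P) ^ n) i l = 0 := by
          apply aux_zero lam mu P hN2 hP n (by omega)
          intro k hk
          rcases hli with hli | ⟨h1, h2⟩ <;> omega
        rw [hzero, zero_mul]
    · intro hne; exact absurd (Finset.mem_univ i) hne
end Aux

theorem trace_pow_M_eq_sum_mu {R : Type*} [CommRing R] (N : ℕ) (hN : 1 ≤ N) (lam : R)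
    (mu : Fin N → R)
    (P : Matrix (Fin N) (Fin N) R)
    (hP : ∀ i j : Fin N, P i j =
      if (j : ℕ) = (i : ℕ) + 1 then 1
      else if (i : ℕ) = N - 1 ∧ (j : ℕ) = 0 then lam else 0)
    (n : ℕ) (hn1 : 1 ≤ n) (hn2 : n ≤ N - 1) :
    Matrix.trace ((Matrix.diagonal mu - P) ^ n) = ∑ j : Fin N, mu j ^ n := by
  have hN2 : 2 ≤ N := by omega
  rw [Matrix.trace]
  apply Finset.sum_congr rfl
  intro i _
  exact aux_diag lam mu P hN2 hP n hn2 i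
end

section
/- With M = μ̃ − P as above, tr(M^N) = Σ_{j=1}^N μ_j^N + (−1)^N N λ. -/
private def hp {R : Type*} [CommRing R] : ℕ → List R → R
  | 0, _ => 1
  | _+1, [] => 0
  | (m+1), (x :: l) => x * hp m (x :: l) + hp (m+1) l

private lemma hp_zero {R : Type*} [CommRing R] (l : List R) : hp 0 l = 1 := by
  cases l <;> simp [hp]

private lemma hp_cons {R : Type*} [CommRing R] (m : ℕ) (x : R) (l : List R) :
    hp (m+1) (x :: l) = x * hp m (x :: l) + hp (m+1) l := by simp [hp]

private lemma hp_singleton {R : Type*} [CommRing R] (m : ℕ) (x : R) :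
    hp m ([x] : List R) = x ^ m := by
  induction m with
  | zero => simp [hp]
  | succ m ih => rw [hp_cons, ih]; simp [hp, pow_succ]; ring

private def win {R : Type*} (N : ℕ) (hN : 0 < N) (mu : Fin N → R) (a t : ℕ) : List R :=
  (List.range (t+1)).map fun s => mu ⟨(a+s) % N, Nat.mod_lt _ hN⟩

private lemma win_zero {R : Type*} (N : ℕ) (hN : 0 < N) (mu : Fin N → R) (a : ℕ) :
    win N hN mu a 0 = [mu ⟨a % N, Nat.mod_lt _ hN⟩] := by
  simp only [win, List.range_succ, List.range_zero, List.nil_append, List.map_cons,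
    List.map_nil, Nat.add_zero]

private lemma win_cong {R : Type*} (N : ℕ) (hN : 0 < N) (mu : Fin N → R) (a b t : ℕ)
    (hab : a % N = b % N) : win N hN mu a t = win N hN mu b t := by
  unfold win
  apply List.map_congr_left
  intro s _
  congr 1
  ext
  simp only
  rw [Nat.add_mod, hab, ← Nat.add_mod]

private lemma win_head {R : Type*} (N : ℕ) (hN : 0 < N) (mu : Fin N → R) (a t : ℕ) :
    win N hN mu a (t+1) = mu ⟨a % N, Nat.mod_lt _ hN⟩ :: win N hN mu (a+1) t := by
  unfold win
  rw [List.range_succ_eq_map]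
  simp only [List.map_cons, List.map_map, Nat.add_zero]
  congr 1
  apply List.map_congr_left
  intro s _
  simp only [Function.comp_apply]
  have h : a + s.succ = a + 1 + s := by omega
  exact congrArg mu (Fin.ext (by simp only; rw [h]))

private def wdist (N : ℕ) (i j : Fin N) : ℕ :=
  if (i:ℕ) ≤ (j:ℕ) then (j:ℕ) - (i:ℕ) else (j:ℕ) + N - (i:ℕ)

private def nxt (N : ℕ) (hN : 0 < N) (i : Fin N) : Fin N :=
  ⟨((i:ℕ)+1) % N, Nat.mod_lt _ hN⟩

private lemma nxt_val (N : ℕ) (hN : 0 < N) (i : Fin N) :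
    ((nxt N hN i) : ℕ) = if (i:ℕ) = N - 1 then 0 else (i:ℕ)+1 := by
  simp only [nxt]
  by_cases hi : (i:ℕ) = N-1
  · have h : (i:ℕ)+1 = N := by have := i.isLt; omega
    rw [if_pos hi, h, Nat.mod_self]
  · have h : (i:ℕ)+1 < N := by have := i.isLt; omega
    rw [if_neg hi, Nat.mod_eq_of_lt h]

private lemma row_mul {R : Type*} [CommRing R] (N : ℕ) (hN : 0 < N) (lam : R)
    (mu : Fin N → R) (P : Matrix (Fin N) (Fin N) R)
    (hP : ∀ i j : Fin N, P i j =
      if (j : ℕ) = (i : ℕ) + 1 then 1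
      else if (i : ℕ) = N - 1 ∧ (j : ℕ) = 0 then lam else 0)
    (X : Matrix (Fin N) (Fin N) R) (i j : Fin N) :
    ((Matrix.diagonal mu - P) * X) i j
      = mu i * X i j - (if (i:ℕ) = N-1 then lam else 1) * X (nxt N hN i) j := by
  have hrow : ∀ l : Fin N, (Matrix.diagonal mu - P) i l =
      (if l = i then mu i else 0)
        - (if l = nxt N hN i then (if (i:ℕ) = N-1 then lam else 1) else 0) := by
    intro l
    rw [Matrix.sub_apply, Matrix.diagonal_apply, hP]
    have hl := l.isLt
    have hi := i.isLt
    have hnv := nxt_val N hN i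
    simp only [Fin.ext_iff, hnv]
    split_ifs <;> (first | omega | ring1)
  rw [Matrix.mul_apply]
  simp only [hrow, sub_mul, ite_mul, zero_mul, Finset.sum_sub_distrib,
    Finset.sum_ite_eq', Finset.mem_univ, if_true]

private lemma key_entries {R : Type*} [CommRing R] (N : ℕ) (hN : 0 < N) (lam : R)
    (mu : Fin N → R) (P : Matrix (Fin N) (Fin N) R)
    (hP : ∀ i j : Fin N, P i j =
      if (j : ℕ) = (i : ℕ) + 1 then 1
      else if (i : ℕ) = N - 1 ∧ (j : ℕ) = 0 then lam else 0) :
    ∀ k, k ≤ N - 1 → ∀ i j : Fin N,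
      ((Matrix.diagonal mu - P) ^ k) i j =
        if wdist N i j ≤ k then
          (-1:R)^(wdist N i j) * (if (j:ℕ) < (i:ℕ) then lam else 1)
            * hp (k - wdist N i j) (win N hN mu (i:ℕ) (wdist N i j))
        else 0 := by
  intro k
  induction k with
  | zero =>
    intro _ i j
    rw [pow_zero, Matrix.one_apply]
    have hd0 : wdist N i j = 0 ↔ i = j := by
      unfold wdist
      rw [Fin.ext_iff]
      have := i.isLt; have := j.isLt
      split <;> omega
    by_cases hij : i = j
    · subst hij
      have h0 : wdist N i i = 0 := hd0.mpr rfl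
      simp [h0, hp_zero]
    · have h0 : ¬ wdist N i j ≤ 0 := fun h => hij (hd0.mp (Nat.le_zero.mp h))
      simp [hij, h0, Ne.symm (hij ∘ Eq.symm)]
  | succ k ih =>
    intro hk i j
    have hiv := i.isLt
    have hjv := j.isLt
    have ihh := ih (by omega)
    rw [pow_succ', row_mul N hN lam mu P hP, ihh, ihh]
    have hnv := nxt_val N hN i
    have hmumod : (⟨(i:ℕ) % N, Nat.mod_lt _ hN⟩ : Fin N) = i :=
      Fin.ext (Nat.mod_eq_of_lt hiv)
    by_cases hij : i = j
    · subst hij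
      have h1 : wdist N i i = 0 := by unfold wdist; simp
      have h2 : wdist N (nxt N hN i) i = N - 1 := by
        unfold wdist
        rw [hnv]
        split_ifs <;> omega
      have h3 : ¬ (N - 1 ≤ k) := by omega
      rw [h1, h2]
      simp only [if_pos (Nat.zero_le k), if_pos (Nat.zero_le (k+1)), if_neg h3,
        Nat.sub_zero, win_zero, hp_singleton, hmumod, pow_zero, lt_irrefl,
        if_neg (lt_irrefl ((i:ℕ))), mul_zero, sub_zero, one_mul, pow_succ]
      ring
    · -- i ≠ j, so t ≥ 1
      have hvij : (i:ℕ) ≠ (j:ℕ) := fun h => hij (Fin.ext h)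
      have ht1 : 1 ≤ wdist N i j := by
        unfold wdist; split <;> omega
      have hdn : wdist N (nxt N hN i) j = wdist N i j - 1 := by
        unfold wdist
        rw [hnv]
        split_ifs <;> omega
      have hcw : (if (i:ℕ) = N-1 then lam else 1) * (if (j:ℕ) < ((nxt N hN i):ℕ) then lam else 1)
          = (if (j:ℕ) < (i:ℕ) then lam else 1) := by
        rw [hnv]
        split_ifs <;> (first | omega | ring1)
      have hwinc : win N hN mu ((nxt N hN i):ℕ) (wdist N i j - 1)
          = win N hN mu ((i:ℕ)+1) (wdist N i j - 1) := by
        apply win_cong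
        rw [nxt]
        simp only
        rw [Nat.mod_mod_of_dvd _ dvd_rfl]
      have hhead : win N hN mu (i:ℕ) (wdist N i j)
          = mu i :: win N hN mu ((i:ℕ)+1) (wdist N i j - 1) := by
        obtain ⟨t, ht⟩ : ∃ t, wdist N i j = t + 1 := ⟨wdist N i j - 1, by omega⟩
        rw [ht]
        have := win_head N hN mu (i:ℕ) t
        rw [this, hmumod, Nat.add_sub_cancel]
      rw [hdn, hwinc]
      by_cases hle : wdist N i j ≤ k
      · -- both terms alive
        rw [if_pos hle, if_pos (by omega : wdist N i j - 1 ≤ k),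
          if_pos (by omega : wdist N i j ≤ k + 1)]
        obtain ⟨t, ht⟩ : ∃ t, wdist N i j = t + 1 := ⟨wdist N i j - 1, by omega⟩
        rw [ht] at hhead hle ⊢
        simp only [Nat.add_sub_cancel] at hhead ⊢
        rw [hhead]
        have hk1 : k + 1 - (t+1) = (k - (t+1)) + 1 := by omega
        have hk2 : k - t = (k - (t+1)) + 1 := by omega
        rw [hk1, hp_cons, hk2, ← hcw]
        ring
      · by_cases hle1 : wdist N i j ≤ k + 1
        · -- wdist = k+1
          have heq : wdist N i j = k + 1 := by omega
          rw [if_neg hle, if_pos (by omega : wdist N i j - 1 ≤ k), if_pos hle1]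
          have hz : k - (wdist N i j - 1) = 0 := by omega
          have hz2 : k + 1 - wdist N i j = 0 := by omega
          rw [hz, hz2, hp_zero, hp_zero]
          rw [← hcw]
          obtain ⟨t, ht⟩ : ∃ t, wdist N i j = t + 1 := ⟨wdist N i j - 1, by omega⟩
          rw [ht]
          simp only [Nat.add_sub_cancel]
          ring
        · rw [if_neg hle, if_neg (by omega : ¬ wdist N i j - 1 ≤ k), if_neg hle1]
          ring

theorem trace_pow_N_M {R : Type*} [CommRing R] (N : ℕ) (hN : 1 ≤ N) (lam : R)
    (mu : Fin N → R)
    (P : Matrix (Fin N) (Fin N) R)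
    (hP : ∀ i j : Fin N, P i j =
      if (j : ℕ) = (i : ℕ) + 1 then 1
      else if (i : ℕ) = N - 1 ∧ (j : ℕ) = 0 then lam else 0) :
    Matrix.trace ((Matrix.diagonal mu - P) ^ N)
      = (∑ j : Fin N, mu j ^ N) + (-1) ^ N * (N : R) * lam := by
  have hN0 : 0 < N := hN
  have hkey := key_entries N hN0 lam mu P hP (N-1) le_rfl
  have hstep : (Matrix.diagonal mu - P) ^ N
      = (Matrix.diagonal mu - P) * (Matrix.diagonal mu - P) ^ (N-1) := by
    rw [← pow_succ']
    congr 1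
    omega
  rw [hstep]
  have hterm : ∀ j : Fin N,
      ((Matrix.diagonal mu - P) * (Matrix.diagonal mu - P) ^ (N-1)) j j
        = mu j ^ N - (-1:R)^(N-1) * lam := by
    intro j
    have hjv := j.isLt
    rw [row_mul N hN0 lam mu P hP]
    have hnv := nxt_val N hN0 j
    have hmumod : (⟨(j:ℕ) % N, Nat.mod_lt _ hN0⟩ : Fin N) = j :=
      Fin.ext (Nat.mod_eq_of_lt hjv)
    have hd1 : wdist N j j = 0 := by unfold wdist; simp
    have e1 := hkey j j
    rw [hd1, if_pos (Nat.zero_le _), Nat.sub_zero, win_zero, hmumod, hp_singleton,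
      pow_zero, if_neg (lt_irrefl ((j:ℕ)))] at e1
    have hd2 : wdist N (nxt N hN0 j) j = N - 1 := by
      unfold wdist; rw [hnv]; split_ifs <;> omega
    have e2 := hkey (nxt N hN0 j) j
    rw [hd2, if_pos le_rfl, Nat.sub_self, hp_zero, mul_one] at e2
    rw [e1, e2]
    have hcc : (if (j:ℕ) = N-1 then lam else 1)
        * (if (j:ℕ) < ((nxt N hN0 j):ℕ) then lam else 1) = lam := by
      rw [hnv]
      split_ifs <;> (first | omega | ring1)
    have hpowN : mu j ^ N = mu j ^ (N-1) * mu j := by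
      rw [← pow_succ, Nat.sub_add_cancel hN]
    rw [hpowN]
    linear_combination (-(-1:R)^(N-1)) * hcc
  rw [Matrix.trace]
  simp only [Matrix.diag_apply, hterm, Finset.sum_sub_distrib, Finset.sum_const,
    Finset.card_univ, Fintype.card_fin, nsmul_eq_mul]
  have hpow : (-1:R)^N = (-1)^(N-1) * (-1) := by
    rw [← pow_succ, Nat.sub_add_cancel hN]
  rw [hpow]
  ring
end

section
/- The characteristic polynomial of M = μ̃ − P is det(z·I − M) = ∏_{j=1}^N (z − μ_j) − (−1)^N λ. -/
open Polynomial Matrix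

theorem charpoly_M {K : Type*} [Field K] (N : ℕ) (hN : 1 ≤ N) (lam : K)
    (mu : Fin N → K)
    (P : Matrix (Fin N) (Fin N) K)
    (hP : ∀ i j : Fin N, P i j =
      if (j : ℕ) = (i : ℕ) + 1 then 1
      else if (i : ℕ) = N - 1 ∧ (j : ℕ) = 0 then lam else 0) :
    (Matrix.diagonal mu - P).charpoly
      = (∏ j : Fin N, (Polynomial.X - Polynomial.C (mu j)))
        - Polynomial.C ((-1) ^ N * lam) := by
  rcases N with _ | _ | n
  · omega
  · -- N = 1
    have h00 : P 0 0 = lam := by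
      rw [hP 0 0]; norm_num
    rw [Matrix.charpoly, Matrix.det_fin_one, Matrix.charmatrix_apply_eq]
    have hMM : (Matrix.diagonal mu - P) 0 0 = mu 0 - lam := by
      simp [Matrix.sub_apply, Matrix.diagonal_apply_eq, h00]
    rw [hMM]
    rw [Fin.prod_univ_one, show ((-1:K)^(0+1) * lam) = -lam by ring,
      _root_.map_neg, _root_.map_sub]
    ring
  · -- N = n + 2 ; write m for n + 1
    set M : Matrix (Fin (n+1+1)) (Fin (n+1+1)) K := Matrix.diagonal mu - P with hM
    have hcol : ∀ i : Fin (n+1+1), M.charmatrix i 0 =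
        if i = 0 then X - C (mu 0) else if i = Fin.last (n+1) then C lam else 0 := by
      intro i
      by_cases h0 : i = 0
      · subst h0
        rw [Matrix.charmatrix_apply_eq]
        have hPz : P 0 0 = 0 := by
          rw [hP 0 0]; norm_num
        have : M 0 0 = mu 0 := by
          simp [hM, Matrix.sub_apply, Matrix.diagonal_apply_eq, hPz]
        simp [this]
      · rw [Matrix.charmatrix_apply_ne _ _ _ h0]
        have hMi0 : M i 0 = -(P i 0) := by
          simp [hM, Matrix.sub_apply, Matrix.diagonal_apply_ne _ h0]
        by_cases hl : i = Fin.last (n+1)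
        · subst hl
          have hPl : P (Fin.last (n+1)) 0 = lam := by
            rw [hP]
            simp [Fin.val_last]
          simp [h0, hMi0, hPl]
        · have hPz : P i 0 = 0 := by
            rw [hP]
            have h1 : ¬ ((0:ℕ) = (i : ℕ) + 1) := by omega
            have h2 : (i : ℕ) ≠ n + 1 := fun h =>
              hl (Fin.ext (by simpa [Fin.val_last] using h))
            simp [Fin.val_zero, h1, h2]
          simp [h0, hl, hMi0, hPz]
    have key := Matrix.det_succ_column_zero M.charmatrix
    rw [Matrix.charpoly, key]
    have hsum : ∑ i : Fin (n+1+1), (-1:K[X]) ^ (i:ℕ) * M.charmatrix i 0 *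
          (M.charmatrix.submatrix i.succAbove Fin.succ).det
        = ((-1:K[X])^((0:Fin (n+1+1)):ℕ) * M.charmatrix 0 0
              * (M.charmatrix.submatrix (0:Fin (n+1+1)).succAbove Fin.succ).det)
          + ((-1:K[X])^((Fin.last (n+1) : Fin (n+1+1)):ℕ) * M.charmatrix (Fin.last (n+1)) 0
              * (M.charmatrix.submatrix (Fin.last (n+1)).succAbove Fin.succ).det) := by
      apply Finset.sum_eq_add (0 : Fin (n+1+1)) (Fin.last (n+1))
      · intro h
        have := congrArg Fin.val h
        simp [Fin.val_last] at this
      · intro c _ hc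
        rw [hcol c]
        simp [hc.1, hc.2]
      · simp
      · simp
    rw [hsum]
    -- first minor: upper triangular
    have hdet1 : (M.charmatrix.submatrix (0:Fin (n+1+1)).succAbove Fin.succ).det
        = ∏ k : Fin (n+1), (X - C (mu k.succ)) := by
      rw [Fin.succAbove_zero]
      have htri : (M.charmatrix.submatrix Fin.succ Fin.succ).BlockTriangular id := by
        intro k l hkl
        simp only [id] at hkl
        simp only [Matrix.submatrix_apply]
        have hne : (l.succ : Fin (n+1+1)) ≠ k.succ := by
          intro h
          exact absurd (Fin.succ_injective _ h) (ne_of_lt hkl)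
        rw [Matrix.charmatrix_apply_ne _ _ _ hne.symm]
        have hPz : P k.succ l.succ = 0 := by
          rw [hP]
          have hkl' : (l : ℕ) < (k : ℕ) := hkl
          have h1 : ¬ ((l : ℕ) = (k : ℕ) + 1) := by omega
          simp [Fin.val_succ, h1]
        have hMd : M k.succ l.succ = 0 := by
          simp [hM, Matrix.sub_apply, Matrix.diagonal_apply_ne _ (Ne.symm hne), hPz]
        simp [hMd]
      rw [Matrix.det_of_upperTriangular htri]
      apply Finset.prod_congr rfl
      intro k _
      simp only [Matrix.submatrix_apply]
      rw [Matrix.charmatrix_apply_eq]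
      have : M k.succ k.succ = mu k.succ := by
        have hPz : P k.succ k.succ = 0 := by
          rw [hP]
          have h1 : ¬ ((k : ℕ) = (k : ℕ) + 1) := by omega
          simp [Fin.val_succ, h1]
        simp [hM, Matrix.sub_apply, Matrix.diagonal_apply_eq, hPz]
      rw [this]
    -- second minor: lower triangular with 1s on diagonal
    have hdet2 : (M.charmatrix.submatrix (Fin.last (n+1)).succAbove Fin.succ).det = 1 := by
      rw [Fin.succAbove_last]
      have hdiag : ∀ k : Fin (n+1),
          (M.charmatrix.submatrix Fin.castSucc Fin.succ) k k = 1 := by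
        intro k
        simp only [Matrix.submatrix_apply]
        have hne : (k.castSucc : Fin (n+1+1)) ≠ k.succ := by
          intro h
          have := congrArg Fin.val h
          simp [Fin.val_succ] at this
        rw [Matrix.charmatrix_apply_ne _ _ _ hne]
        have hP1 : P k.castSucc k.succ = 1 := by
          rw [hP]
          simp [Fin.val_succ]
        have : M k.castSucc k.succ = -1 := by
          simp [hM, Matrix.sub_apply, Matrix.diagonal_apply_ne _ hne, hP1]
        simp [this]
      have htri : (M.charmatrix.submatrix Fin.castSucc Fin.succ).BlockTriangular
          OrderDual.toDual := by
        intro k l hkl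
        simp only [OrderDual.toDual_lt_toDual] at hkl
        simp only [Matrix.submatrix_apply]
        have hne : (k.castSucc : Fin (n+1+1)) ≠ l.succ := by
          intro h
          have := congrArg Fin.val h
          simp only [Fin.coe_castSucc, Fin.val_succ] at this
          omega
        rw [Matrix.charmatrix_apply_ne _ _ _ hne]
        have hPz : P k.castSucc l.succ = 0 := by
          rw [hP]
          have hkl' : (k : ℕ) < (l : ℕ) := hkl
          have h1 : ¬ ((l : ℕ) = (k : ℕ)) := by omega
          have h3 : ¬ ((k : ℕ) = n + 1) := by omega
          simp [Fin.val_succ, Fin.coe_castSucc, h1, h3]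
        have : M k.castSucc l.succ = 0 := by
          simp [hM, Matrix.sub_apply, Matrix.diagonal_apply_ne _ hne, hPz]
        simp [this]
      rw [Matrix.det_of_lowerTriangular _ htri]
      exact Finset.prod_eq_one fun k _ => hdiag k
    rw [hdet1, hdet2, hcol 0, hcol (Fin.last (n+1))]
    have hlast0 : (Fin.last (n+1) : Fin (n+1+1)) ≠ 0 := by
      intro h
      have := congrArg Fin.val h
      simp [Fin.val_last] at this
    rw [if_pos rfl, if_neg hlast0, if_pos rfl]
    conv_rhs => rw [Fin.prod_univ_succ]
    simp only [Fin.val_last, Fin.val_zero, pow_zero, one_mul, mul_one]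
    have hC : ((-1:K[X])^(n+1) * C lam) = - C ((-1:K)^(n+1+1) * lam) := by
      rw [_root_.map_mul, _root_.map_pow, _root_.map_neg, _root_.map_one]
      ring
    rw [hC]
    ring
end

section
/- For M = μ̃ − P, one has tr(Π·M^n) = 0 for all 0 ≤ n ≤ N−2, and tr(Π·M^{N−1}) = (−1)^{N−1}. -/
theorem trace_Pi_mul_pow_M {R : Type*} [CommRing R] (N : ℕ) (hN : 1 ≤ N) (lam : R)
    (mu : Fin N → R)
    (P Pi : Matrix (Fin N) (Fin N) R)
    (hP : ∀ i j : Fin N, P i j =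
      if (j : ℕ) = (i : ℕ) + 1 then 1
      else if (i : ℕ) = N - 1 ∧ (j : ℕ) = 0 then lam else 0)
    (hPi : ∀ i j : Fin N, Pi i j =
      if (i : ℕ) = N - 1 ∧ (j : ℕ) = 0 then 1 else 0) :
    (∀ n : ℕ, n + 2 ≤ N → Matrix.trace (Pi * (Matrix.diagonal mu - P) ^ n) = 0) ∧
    Matrix.trace (Pi * (Matrix.diagonal mu - P) ^ (N - 1)) = (-1 : R) ^ (N - 1) := by
  set M := Matrix.diagonal mu - P with hM
  have hz : 0 < N := hN
  set z : Fin N := ⟨0, hz⟩ with hzdef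
  set e : Fin N := ⟨N - 1, by omega⟩ with hedef
  have hMe : ∀ i j : Fin N, M i j = (if i = j then mu i else 0)
      - (if (j : ℕ) = (i : ℕ) + 1 then 1
        else if (i : ℕ) = N - 1 ∧ (j : ℕ) = 0 then lam else 0) := by
    intro i j
    simp [hM, Matrix.sub_apply, Matrix.diagonal_apply, hP i j]
  -- trace formula
  have htr : ∀ A : Matrix (Fin N) (Fin N) R, Matrix.trace (Pi * A) = A z e := by
    intro A
    have h1 : Matrix.trace (Pi * A) = ∑ i : Fin N, ∑ k : Fin N, Pi i k * A k i := by
      simp [Matrix.trace, Matrix.mul_apply, Matrix.diag]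
    rw [h1]
    rw [Finset.sum_eq_single e]
    · rw [Finset.sum_eq_single z]
      · rw [hPi]; simp [hedef, hzdef]
      · intro k _ hk
        rw [hPi]
        have : (k : ℕ) ≠ 0 := by
          intro h
          exact hk (Fin.ext (by simpa using h))
        simp [this]
      · intro h; exact absurd (Finset.mem_univ z) h
    · intro i _ hi
      apply Finset.sum_eq_zero
      intro k _
      rw [hPi]
      have : ¬ ((i : ℕ) = N - 1 ∧ (k : ℕ) = 0) := by
        intro h
        exact hi (Fin.ext (by simpa [hedef] using h.1))
      simp [this]
    · intro h; exact absurd (Finset.mem_univ e) h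
  -- key induction
  have key : ∀ n : ℕ, ∀ j : Fin N,
      (n < (j : ℕ) → (M ^ n) z j = 0) ∧ ((j : ℕ) = n → (M ^ n) z j = (-1 : R) ^ n) := by
    intro n
    induction n with
    | zero =>
      intro j
      constructor
      · intro hj
        have : z ≠ j := by intro h; rw [← h] at hj; simp [hzdef] at hj
        simp [Matrix.one_apply, this]
      · intro hj
        have : z = j := Fin.ext (by simp [hzdef, hj])
        simp [Matrix.one_apply, this]
    | succ n ih =>
      intro j
      have hmul : (M ^ (n + 1)) z j = ∑ k : Fin N, (M ^ n) z k * M k j := by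
        rw [pow_succ, Matrix.mul_apply]
      constructor
      · intro hj
        rw [hmul]
        apply Finset.sum_eq_zero
        intro k _
        by_cases hk : n < (k : ℕ)
        · rw [(ih k).1 hk, zero_mul]
        · push_neg at hk
          have hkj : k ≠ j := by intro h; rw [h] at hk; omega
          have h1 : ¬ ((j : ℕ) = (k : ℕ) + 1) := by omega
          have h2 : ¬ ((k : ℕ) = N - 1 ∧ (j : ℕ) = 0) := by
            rintro ⟨hk1, hj0⟩; omega
          rw [hMe k j]
          simp [hkj, h1, h2]
      · intro hj
        have hnN : n + 1 < N := hj ▸ j.isLt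
        set kn : Fin N := ⟨n, by omega⟩ with hkn
        rw [hmul]
        rw [Finset.sum_eq_single kn]
        · have hjk : (j : ℕ) = (kn : ℕ) + 1 := by simp [hkn, hj]
          have hknj : kn ≠ j := by
            intro h; rw [h] at hjk; omega
          rw [(ih kn).2 (by simp [hkn]), hMe kn j]
          simp [hknj, hjk, pow_succ]
        · intro k _ hk
          by_cases hkgt : n < (k : ℕ)
          · rw [(ih k).1 hkgt, zero_mul]
          · push_neg at hkgt
            have hklt : (k : ℕ) < n := by
              rcases lt_or_eq_of_le hkgt with h | h
              · exact h
              · exact absurd (Fin.ext (by simp [hkn, h])) hk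
            have hkj : k ≠ j := by intro h; rw [h] at hklt; omega
            have h1 : ¬ ((j : ℕ) = (k : ℕ) + 1) := by omega
            have h2 : ¬ ((k : ℕ) = N - 1 ∧ (j : ℕ) = 0) := by
              rintro ⟨hk1, hj0⟩; omega
            rw [hMe k j]
            simp [hkj, h1, h2]
        · intro h; exact absurd (Finset.mem_univ kn) h
  refine ⟨?_, ?_⟩
  · intro n hn
    rw [htr]
    exact (key n e).1 (by simp [hedef]; omega)
  · rw [htr]
    exact (key (N - 1) e).2 (by simp [hedef])
end

section
/- Let B_1,…,B_k be arbitrary diagonal N×N matrices and n_1,…,n_k nonnegative integers with n_1 + ⋯ + n_k ≤ N−2 and k ≤ N−2. Then tr(Π·B_1·P^{n_1}·B_2·P^{n_2}⋯B_k·P^{n_k}) = 0. -/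
private lemma pow_entry_zero {R : Type*} [CommRing R] {N : ℕ}
    (P : Matrix (Fin N) (Fin N) R)
    (hP : ∀ i j : Fin N, (i : ℕ) + 1 < (j : ℕ) → P i j = 0) :
    ∀ (m : ℕ) (i j : Fin N), (i : ℕ) + m < (j : ℕ) → (P ^ m) i j = 0 := by
  intro m
  induction m with
  | zero =>
    intro i j h
    simp only [pow_zero, Matrix.one_apply]
    rw [if_neg]
    intro e; subst e; omega
  | succ m ih =>
    intro i j h
    rw [pow_succ, Matrix.mul_apply]
    apply Finset.sum_eq_zero
    intro x _
    by_cases hx : (i : ℕ) + m < (x : ℕ)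
    · rw [ih i x hx, zero_mul]
    · rw [hP x j (by omega), mul_zero]

private lemma prod_entry_zero {R : Type*} [CommRing R] {N : ℕ}
    (P : Matrix (Fin N) (Fin N) R)
    (hP : ∀ i j : Fin N, (i : ℕ) + 1 < (j : ℕ) → P i j = 0) :
    ∀ (k : ℕ) (b : Fin k → (Fin N → R)) (n : Fin k → ℕ) (i j : Fin N),
      (i : ℕ) + (∑ t, n t) < (j : ℕ) →
      (List.ofFn (fun t : Fin k => Matrix.diagonal (b t) * P ^ (n t))).prod i j = 0 := by
  intro k
  induction k with
  | zero =>
    intro b n i j h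
    simp only [List.ofFn_zero, List.prod_nil, Matrix.one_apply]
    rw [if_neg]
    intro e; subst e
    simp at h
  | succ k ih =>
    intro b n i j h
    rw [List.ofFn_succ, List.prod_cons, Matrix.mul_apply]
    apply Finset.sum_eq_zero
    intro x _
    have hde : (Matrix.diagonal (b 0) * P ^ (n 0)) i x = b 0 i * (P ^ (n 0)) i x := by
      simp [Matrix.mul_apply, Matrix.diagonal_apply]
    rw [hde]
    by_cases hx : (i : ℕ) + n 0 < (x : ℕ)
    · rw [pow_entry_zero P hP _ i x hx, mul_zero, zero_mul]
    · have hsum : (∑ t : Fin (k+1), n t) = n 0 + ∑ t : Fin k, n t.succ :=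
        Fin.sum_univ_succ n
      have hx' : (x : ℕ) + ∑ t : Fin k, (fun t => n t.succ) t < (j : ℕ) := by
        simp only []
        omega
      rw [ih (fun t => b t.succ) (fun t => n t.succ) x j hx', mul_zero]

theorem trace_Pi_mul_word_eq_zero {R : Type*} [CommRing R] (N : ℕ) (hN : 2 ≤ N) (lam : R)
    (P Pi : Matrix (Fin N) (Fin N) R)
    (hP : ∀ i j : Fin N, P i j =
      if (j : ℕ) = (i : ℕ) + 1 then 1
      else if (i : ℕ) = N - 1 ∧ (j : ℕ) = 0 then lam else 0)
    (hPi : ∀ i j : Fin N, Pi i j =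
      if (i : ℕ) = N - 1 ∧ (j : ℕ) = 0 then 1 else 0)
    (k : ℕ) (hk : k + 2 ≤ N)
    (b : Fin k → (Fin N → R)) (n : Fin k → ℕ)
    (hn : (∑ i : Fin k, n i) + 2 ≤ N) :
    Matrix.trace (Pi *
      (List.ofFn (fun i : Fin k => Matrix.diagonal (b i) * P ^ (n i))).prod) = 0 := by
  have hP' : ∀ i j : Fin N, (i : ℕ) + 1 < (j : ℕ) → P i j = 0 := by
    intro i j h
    rw [hP]
    rw [if_neg (by omega), if_neg (by omega)]
  set M := (List.ofFn (fun i : Fin k => Matrix.diagonal (b i) * P ^ (n i))).prod with hM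
  have h0 : (0 : ℕ) < N := by omega
  have hL : N - 1 < N := by omega
  set i0 : Fin N := ⟨0, h0⟩
  set iL : Fin N := ⟨N - 1, hL⟩
  have hPi' : ∀ i j : Fin N, Pi i j = if i = iL ∧ j = i0 then 1 else 0 := by
    intro i j
    rw [hPi]
    apply if_congr _ rfl rfl
    simp [Fin.ext_iff, i0, iL]
  have key : Matrix.trace (Pi * M) = M i0 iL := by
    simp only [Matrix.trace, Matrix.diag, Matrix.mul_apply, hPi', ite_mul, one_mul, zero_mul]
    rw [Finset.sum_comm]
    simp [ite_and, Finset.sum_ite_eq', Finset.sum_ite_eq]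
  rw [key]
  exact prod_entry_zero P hP' k b n i0 iL (by simp [i0, iL]; omega)
end

section
/- The power series f(t) = t^{N−1} Σ_{k≥0} λ^k t^{Nk}/(Nk+N−1)! satisfies f(t) = tr(Π·exp(tP)) for all real t, where exp denotes the matrix exponential. -/
open NormedSpace

theorem trace_Pi_exp_eq_series (N : ℕ) (hN : 1 ≤ N) (lam : ℂ)
    (P Pi : Matrix (Fin N) (Fin N) ℂ)
    (hP : ∀ i j : Fin N, P i j =
      if (j : ℕ) = (i : ℕ) + 1 then 1
      else if (i : ℕ) = N - 1 ∧ (j : ℕ) = 0 then lam else 0)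
    (hPi : ∀ i j : Fin N, Pi i j =
      if (i : ℕ) = N - 1 ∧ (j : ℕ) = 0 then 1 else 0) :
    ∀ t : ℝ, Matrix.trace (Pi * exp ((t : ℂ) • P))
      = (t : ℂ) ^ (N - 1) *
        ∑' k : ℕ, lam ^ k * (t : ℂ) ^ (N * k) / (Nat.factorial (N * k + N - 1)) := by
  intro t
  have hN0 : 0 < N := hN
  obtain ⟨i0, hi0⟩ : ∃ i : Fin N, (i : ℕ) = 0 := ⟨⟨0, hN0⟩, rfl⟩
  obtain ⟨iN, hiNv⟩ : ∃ i : Fin N, (i : ℕ) = N - 1 := ⟨⟨N - 1, by omega⟩, rfl⟩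
  -- Step 1: trace (Pi * M) = M i0 iN
  have htr : ∀ M : Matrix (Fin N) (Fin N) ℂ, Matrix.trace (Pi * M) = M i0 iN := by
    intro M
    simp only [Matrix.trace, Matrix.diag, Matrix.mul_apply, hPi]
    rw [Finset.sum_eq_single iN]
    · rw [Finset.sum_eq_single i0]
      · rw [if_pos ⟨hiNv, hi0⟩, one_mul]
      · intro j _ hj
        rw [if_neg, zero_mul]
        rintro ⟨-, h2⟩
        exact hj (Fin.ext (by omega))
      · intro h; exact absurd (Finset.mem_univ i0) h
    · intro i _ hi
      apply Finset.sum_eq_zero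
      intro j _
      rw [if_neg, zero_mul]
      rintro ⟨h1, -⟩
      exact hi (Fin.ext (by omega))
    · intro h; exact absurd (Finset.mem_univ iN) h
  -- Step 2: entries of powers of P
  have hpow : ∀ (n : ℕ) (j : Fin N),
      (P ^ n) i0 j = if n % N = (j : ℕ) then lam ^ (n / N) else 0 := by
    intro n
    induction n with
    | zero =>
      intro j
      rw [pow_zero, Nat.zero_mod, Nat.zero_div, pow_zero]
      by_cases h : i0 = j
      · subst h
        rw [Matrix.one_apply_eq, if_pos hi0.symm]
      · rw [Matrix.one_apply_ne h, if_neg (fun h0 => h (Fin.ext (by omega)))]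
    | succ n ih =>
      intro j
      have hqr : N * (n / N) + n % N = n := Nat.div_add_mod n N
      have hrlt : n % N < N := Nat.mod_lt n hN0
      rw [pow_succ, Matrix.mul_apply]
      by_cases hj : (j : ℕ) = 0
      · -- only i = iN contributes
        rw [Finset.sum_eq_single iN]
        · rw [ih iN, hP, if_neg (show ¬((j : ℕ) = (iN : ℕ) + 1) by omega),
            if_pos (show (iN : ℕ) = N - 1 ∧ (j : ℕ) = 0 from ⟨hiNv, hj⟩)]
          by_cases h : n % N = N - 1
          · have hm : (n + 1) % N = 0 := by
              rw [show n + 1 = N * (n / N) + N by omega, Nat.mul_add_mod, Nat.mod_self]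
            have hd : (n + 1) / N = n / N + 1 := by
              rw [show n + 1 = N * (n / N) + N by omega, Nat.mul_add_div hN0,
                Nat.div_self hN0]
            rw [if_pos (show n % N = (iN : ℕ) by omega),
              if_pos (show (n + 1) % N = (j : ℕ) by omega), hd, pow_succ]
          · have h2 : (n + 1) % N = n % N + 1 := by
              rw [show n + 1 = N * (n / N) + (n % N + 1) by omega,
                Nat.mul_add_mod, Nat.mod_eq_of_lt (by omega)]
            rw [if_neg (show ¬(n % N = (iN : ℕ)) by omega), zero_mul,
              if_neg (show ¬((n + 1) % N = (j : ℕ)) by omega)]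
        · intro i _ hi
          rw [hP, if_neg (by omega), if_neg, mul_zero]
          rintro ⟨h1, -⟩
          exact hi (Fin.ext (by omega))
        · intro h; exact absurd (Finset.mem_univ iN) h
      · -- only i = j - 1 contributes
        obtain ⟨jp, hjpv⟩ : ∃ i : Fin N, (i : ℕ) = (j : ℕ) - 1 :=
          ⟨⟨(j : ℕ) - 1, by omega⟩, rfl⟩
        have hjlt : (j : ℕ) < N := j.isLt
        rw [Finset.sum_eq_single jp]
        · rw [ih jp, hP, if_pos (show (j : ℕ) = (jp : ℕ) + 1 by omega), mul_one]
          by_cases h : n % N = (j : ℕ) - 1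
          · have hm : (n + 1) % N = (j : ℕ) := by
              rw [show n + 1 = N * (n / N) + (j : ℕ) by omega,
                Nat.mul_add_mod, Nat.mod_eq_of_lt hjlt]
            have hd : (n + 1) / N = n / N := by
              rw [show n + 1 = N * (n / N) + (j : ℕ) by omega,
                Nat.mul_add_div hN0, Nat.div_eq_of_lt hjlt, Nat.add_zero]
            rw [if_pos (show n % N = (jp : ℕ) by omega), if_pos hm, hd]
          · have hne : (n + 1) % N ≠ (j : ℕ) := by
              by_cases h' : n % N = N - 1
              · have hm : (n + 1) % N = 0 := by
                  rw [show n + 1 = N * (n / N) + N by omega, Nat.mul_add_mod,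
                    Nat.mod_self]
                omega
              · have h2 : (n + 1) % N = n % N + 1 := by
                  rw [show n + 1 = N * (n / N) + (n % N + 1) by omega,
                    Nat.mul_add_mod, Nat.mod_eq_of_lt (by omega)]
                omega
            rw [if_neg (show ¬(n % N = (jp : ℕ)) by omega), if_neg hne]
        · intro i _ hi
          rw [hP, if_neg, if_neg (by omega), mul_zero]
          intro h1
          exact hi (Fin.ext (by omega))
        · intro h; exact absurd (Finset.mem_univ jp) h
  -- Step 3: expand the exponential
  letI : SeminormedRing (Matrix (Fin N) (Fin N) ℂ) := Matrix.linftyOpSemiNormedRing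
  letI : NormedRing (Matrix (Fin N) (Fin N) ℂ) := Matrix.linftyOpNormedRing
  letI : NormedAlgebra ℂ (Matrix (Fin N) (Fin N) ℂ) := Matrix.linftyOpNormedAlgebra
  set A : Matrix (Fin N) (Fin N) ℂ := (t : ℂ) • P with hA
  have hsum : Summable (fun n : ℕ => ((n.factorial : ℂ))⁻¹ • A ^ n) :=
    expSeries_summable' A
  let e : Matrix (Fin N) (Fin N) ℂ →L[ℂ] ℂ :=
    { toFun := fun M => M i0 iN
      map_add' := fun M M' => rfl
      map_smul' := fun c M => rfl
      cont := (continuous_apply iN).comp (continuous_apply i0) }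
  have hexp : Matrix.trace (Pi * exp A)
      = ∑' n : ℕ, ((n.factorial : ℂ))⁻¹ • (A ^ n) i0 iN := by
    rw [htr, exp_eq_tsum (𝕂 := ℂ)]
    exact e.map_tsum hsum
  rw [hexp]
  -- Step 4: compute the series
  have hentry : ∀ n : ℕ, ((n.factorial : ℂ))⁻¹ • (A ^ n) i0 iN
      = ((n.factorial : ℂ))⁻¹ * ((t : ℂ) ^ n *
          (if n % N = N - 1 then lam ^ (n / N) else 0)) := by
    intro n
    rw [hA, smul_pow, Matrix.smul_apply, hpow n iN, hiNv, smul_eq_mul, smul_eq_mul]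
  simp_rw [hentry]
  rw [← tsum_mul_left]
  have hinj : Function.Injective (fun k : ℕ => N * k + (N - 1)) := by
    intro a b h
    simp only at h
    exact Nat.eq_of_mul_eq_mul_left hN0 (by omega : N * a = N * b)
  rw [← Function.Injective.tsum_eq hinj]
  · apply tsum_congr
    intro k
    have h1 : (N * k + (N - 1)) % N = N - 1 := by
      rw [Nat.mul_add_mod, Nat.mod_eq_of_lt (by omega)]
    have h2 : (N * k + (N - 1)) / N = k := by
      rw [Nat.mul_add_div hN0, Nat.div_eq_of_lt (by omega), Nat.add_zero]
    have h3 : N * k + (N - 1) = N * k + N - 1 := by omega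
    have h4 : (t : ℂ) ^ (N * k + N - 1) = (t : ℂ) ^ (N * k) * (t : ℂ) ^ (N - 1) := by
      rw [← pow_add]
      congr 1
      omega
    have hfac : ((N * k + N - 1).factorial : ℂ) ≠ 0 :=
      Nat.cast_ne_zero.2 (Nat.factorial_ne_zero _)
    rw [h1, if_pos rfl, h2, h3, h4]
    field_simp
  · intro n hn
    rw [Set.mem_range]
    by_cases h : n % N = N - 1
    · exact ⟨n / N, by have := Nat.div_add_mod n N; omega⟩
    · exact absurd (by simp only [if_neg h, mul_zero]) hn
end

section
/- For λ ≠ 0, tr(Π·exp(tP)) = (1/(Nλ)) Σ_{j=1}^N p_j · e^{t p_j}, where p_1,…,p_N are the N distinct N-th roots of λ. -/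
open NormedSpace

private lemma nat_step (N m : ℕ) (hN : 1 ≤ N) :
    (m % N = N - 1 → (m + 1) % N = 0 ∧ (m + 1) / N = m / N + 1) ∧
    (m % N ≠ N - 1 → (m + 1) % N = m % N + 1 ∧ (m + 1) / N = m / N) := by
  have h := Nat.div_add_mod m N
  have hlt : m % N < N := Nat.mod_lt _ (by omega)
  constructor
  · intro hr
    have hm : m + 1 = N * (m / N + 1) := by
      have : N * (m / N + 1) = N * (m / N) + N := by ring
      omega
    constructor
    · rw [hm]; exact Nat.mul_mod_right _ _
    · rw [hm]; exact Nat.mul_div_cancel_left _ (by omega)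
  · intro hr
    have := (Nat.div_mod_unique (a := m + 1) (b := N) (c := m % N + 1) (d := m / N)
      (by omega)).mpr ⟨by omega, by omega⟩
    exact ⟨this.2, this.1⟩

private lemma nat_dvd_facts (N n k : ℕ) (hN : 1 ≤ N) (hk : n + 1 = N * k) :
    n % N = N - 1 ∧ n / N + 1 = k := by
  have hk0 : k ≠ 0 := by rintro rfl; simp at hk
  obtain ⟨k', rfl⟩ : ∃ k', k = k' + 1 := ⟨k - 1, by omega⟩
  have h1 : N * (k' + 1) = N * k' + N := by ring
  have h2 : n = N * k' + (N - 1) := by omega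
  rw [h2]
  constructor
  · rw [Nat.mul_add_mod]; exact Nat.mod_eq_of_lt (by omega)
  · rw [Nat.mul_add_div (by omega), Nat.div_eq_of_lt (by omega)]

private lemma pow_entry (N : ℕ) (hN : 1 ≤ N) (lam : ℂ)
    (P : Matrix (Fin N) (Fin N) ℂ)
    (hP : ∀ i j : Fin N, P i j =
      if (j : ℕ) = (i : ℕ) + 1 then 1
      else if (i : ℕ) = N - 1 ∧ (j : ℕ) = 0 then lam else 0) :
    ∀ (n : ℕ) (i j : Fin N), (P ^ n) i j =
      if ((i : ℕ) + n) % N = (j : ℕ) then lam ^ (((i : ℕ) + n) / N) else 0 := by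
  intro n
  induction n with
  | zero =>
    intro i j
    have h1 : ((i : ℕ) + 0) % N = (i : ℕ) := by simp [Nat.mod_eq_of_lt i.isLt]
    have h2 : ((i : ℕ) + 0) / N = 0 := by simp [Nat.div_eq_of_lt i.isLt]
    rw [pow_zero, Matrix.one_apply, h1, h2, pow_zero]
    simp [Fin.ext_iff]
  | succ n ih =>
    intro i j
    have hlt : ((i : ℕ) + n) % N < N := Nat.mod_lt _ (by omega)
    set k : Fin N := ⟨((i : ℕ) + n) % N, hlt⟩ with hk
    have hsum : ∀ x : Fin N, (P ^ n) i x * P x j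
        = if x = k then lam ^ (((i : ℕ) + n) / N) * P k j else 0 := by
      intro x
      rw [ih i x]
      by_cases hx : x = k
      · subst hx; simp [hk]
      · have hx' : ¬ (((i : ℕ) + n) % N = (x : ℕ)) := by
          intro h; exact hx (Fin.ext (by simp [hk, ← h]))
        simp [hx', hx]
    rw [pow_succ, Matrix.mul_apply, Finset.sum_congr rfl (fun x _ => hsum x),
      Finset.sum_ite_eq' Finset.univ k, if_pos (Finset.mem_univ k)]
    rw [hP k j]
    have hkv : (k : ℕ) = ((i : ℕ) + n) % N := rfl
    have hstep := nat_step N ((i : ℕ) + n) hN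
    have hi : (i : ℕ) + (n + 1) = ((i : ℕ) + n) + 1 := by omega
    by_cases hr : ((i : ℕ) + n) % N = N - 1
    · have h1 := hstep.1 hr
      rw [hi, h1.1, h1.2]
      have hj1 : ¬ ((j : ℕ) = (k : ℕ) + 1) := by
        have := j.isLt; omega
      rw [if_neg hj1]
      by_cases hj0 : (j : ℕ) = 0
      · rw [if_pos ⟨by omega, hj0⟩, if_pos hj0.symm, pow_succ]
      · rw [if_neg (by tauto), if_neg (by omega), mul_zero]
    · have h1 := hstep.2 hr
      rw [hi, h1.1, h1.2]
      have hk1 : ¬ ((k : ℕ) = N - 1 ∧ (j : ℕ) = 0) := by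
        rw [hkv]; tauto
      by_cases hj : (j : ℕ) = (k : ℕ) + 1
      · rw [if_pos hj, if_pos (by omega), mul_one]
      · rw [if_neg hj, if_neg hk1, if_neg (by omega), mul_zero]

private lemma power_sum (N : ℕ) (hN : 1 ≤ N) (lam : ℂ) (hlam : lam ≠ 0)
    (p : Fin N → ℂ) (hinj : Function.Injective p)
    (hroot : ∀ j, p j ^ N = lam) (m : ℕ) :
    ∑ j : Fin N, p j ^ m = if N ∣ m then (N : ℂ) * lam ^ (m / N) else 0 := by
  obtain ⟨ω, hω⟩ : ∃ ω : ℂ, IsPrimitiveRoot ω N :=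
    ⟨_, Complex.isPrimitiveRoot_exp N (by omega)⟩
  set j0 : Fin N := ⟨0, hN⟩ with hj0
  have hp0 : p j0 ≠ 0 := by
    intro h
    apply hlam
    rw [← hroot j0, h, zero_pow (by omega)]
  have hω1 : ω ^ N = 1 := hω.pow_eq_one
  set g : Fin N → ℂ := fun k => p j0 * ω ^ (k : ℕ) with hg
  have hginj : Function.Injective g := by
    intro a b hab
    have : ω ^ (a : ℕ) = ω ^ (b : ℕ) := by
      exact mul_left_cancel₀ hp0 hab
    exact Fin.ext (hω.pow_inj a.isLt b.isLt this)
  have hgroot : ∀ k, g k ^ N = lam := by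
    intro k
    rw [hg]
    simp only
    rw [mul_pow, ← pow_mul, mul_comm (k : ℕ) N, pow_mul, hω1, one_pow, mul_one, hroot]
  set S : Finset ℂ := (Polynomial.nthRoots N lam).toFinset with hS
  have hmem : ∀ x : ℂ, x ∈ S ↔ x ^ N = lam := by
    intro x
    rw [hS, Multiset.mem_toFinset, Polynomial.mem_nthRoots (by omega)]
  have hScard : S.card ≤ N := le_trans (Multiset.toFinset_card_le _) (Polynomial.card_nthRoots _ _)
  have himg : ∀ (q : Fin N → ℂ), Function.Injective q → (∀ k, q k ^ N = lam) →
      Finset.image q Finset.univ = S := by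
    intro q hq hqr
    apply Finset.eq_of_subset_of_card_le
    · intro x hx
      obtain ⟨k, _, rfl⟩ := Finset.mem_image.mp hx
      exact (hmem _).mpr (hqr k)
    · rw [Finset.card_image_of_injective _ hq, Finset.card_univ, Fintype.card_fin]
      exact hScard
  have hsum : ∑ j : Fin N, p j ^ m = ∑ k : Fin N, g k ^ m := by
    rw [← Finset.sum_image (f := fun x => x ^ m)
        (g := p) (fun a _ b _ h => hinj h),
      ← Finset.sum_image (f := fun x => x ^ m)
        (g := g) (fun a _ b _ h => hginj h),
      himg p hinj hroot, himg g hginj hgroot]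
  rw [hsum]
  have hterm : ∀ k : Fin N, g k ^ m = p j0 ^ m * (ω ^ m) ^ (k : ℕ) := by
    intro k
    rw [hg]; simp only
    rw [mul_pow, ← pow_mul, ← pow_mul, mul_comm (k : ℕ) m]
  rw [Finset.sum_congr rfl (fun k _ => hterm k), ← Finset.mul_sum]
  rw [Fin.sum_univ_eq_sum_range (fun k => (ω ^ m) ^ k)]
  by_cases hdvd : N ∣ m
  · obtain ⟨c, rfl⟩ := hdvd
    have hωm : ω ^ (N * c) = 1 := by rw [pow_mul, hω1, one_pow]
    rw [if_pos ⟨c, rfl⟩, hωm]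
    simp only [one_pow, Finset.sum_const, Finset.card_range, nsmul_eq_mul, mul_one]
    rw [Nat.mul_div_cancel_left _ (by omega : 0 < N)]
    rw [pow_mul, hroot j0]
    ring
  · have hωm : ω ^ m ≠ 1 := by
      intro h
      exact hdvd ((hω.pow_eq_one_iff_dvd m).mp h)
    rw [if_neg hdvd, geom_sum_eq hωm]
    rw [← pow_mul, mul_comm m N, pow_mul, hω1, one_pow]
    simp

theorem trace_Pi_exp_eq_sum_roots (N : ℕ) (hN : 1 ≤ N) (lam : ℂ) (hlam : lam ≠ 0)
    (P Pi : Matrix (Fin N) (Fin N) ℂ)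
    (hP : ∀ i j : Fin N, P i j =
      if (j : ℕ) = (i : ℕ) + 1 then 1
      else if (i : ℕ) = N - 1 ∧ (j : ℕ) = 0 then lam else 0)
    (hPi : ∀ i j : Fin N, Pi i j =
      if (i : ℕ) = N - 1 ∧ (j : ℕ) = 0 then 1 else 0)
    (p : Fin N → ℂ) (hinj : Function.Injective p)
    (hroot : ∀ j, (p j) ^ N = lam) :
    ∀ t : ℂ, Matrix.trace (Pi * exp (t • P))
      = (1 / ((N : ℂ) * lam)) * ∑ j : Fin N, p j * Complex.exp (t * p j) := by
  intro t
  have hNC : (N : ℂ) ≠ 0 := Nat.cast_ne_zero.mpr (by omega)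
  set i0 : Fin N := ⟨0, hN⟩ with hi0
  set iL : Fin N := ⟨N - 1, by omega⟩ with hiL
  have hi0v : (i0 : ℕ) = 0 := rfl
  have hiLv : (iL : ℕ) = N - 1 := rfl
  have hpent := pow_entry N hN lam P hP
  -- entrywise summability of the exponential series
  have hent : ∀ i j : Fin N,
      Summable (fun n : ℕ => ((n.factorial : ℂ))⁻¹ * t ^ n * (P ^ n) i j) := by
    intro i j
    set C : ℝ := max 1 ‖lam‖ with hC
    have hC1 : (1 : ℝ) ≤ C := le_max_left _ _
    have habs : ‖lam‖ ≤ C := le_max_right _ _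
    apply Summable.of_norm_bounded
      (g := fun n => C ^ N * ((‖t‖ * C) ^ n / n.factorial))
    · exact (Real.summable_pow_div_factorial _).mul_left _
    · intro n
      rw [hpent n i j]
      by_cases h : ((i : ℕ) + n) % N = (j : ℕ)
      · rw [if_pos h]
        have hnorm : ‖((n.factorial : ℂ))⁻¹ * t ^ n * lam ^ (((i : ℕ) + n) / N)‖
            = ((n.factorial : ℝ))⁻¹ * ‖t‖ ^ n
              * ‖lam‖ ^ (((i : ℕ) + n) / N) := by
          simp [norm_mul, norm_pow, norm_inv]
        rw [hnorm]
        have hq : (((i : ℕ) + n) / N) ≤ N + n := by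
          have := Nat.div_le_self ((i : ℕ) + n) N
          have := i.isLt
          omega
        have hv : ‖lam‖ ^ (((i : ℕ) + n) / N) ≤ C ^ (N + n) :=
          le_trans (pow_le_pow_left₀ (norm_nonneg _) habs _)
            (pow_le_pow_right₀ hC1 hq)
        have heq : C ^ N * ((‖t‖ * C) ^ n / n.factorial)
            = ((n.factorial : ℝ))⁻¹ * ‖t‖ ^ n * C ^ (N + n) := by
          rw [mul_pow, pow_add]; ring
        rw [heq]
        exact mul_le_mul_of_nonneg_left hv (by positivity)
      · rw [if_neg h, mul_zero, norm_zero]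
        positivity
  have hsm : Summable (fun n : ℕ => ((n.factorial : ℂ))⁻¹ • (t • P) ^ n) := by
    apply _root_.Pi.summable.mpr; intro i; apply _root_.Pi.summable.mpr; intro j
    apply (hent i j).congr
    intro n
    rw [smul_pow]
    show ((n.factorial : ℂ))⁻¹ * t ^ n * (P ^ n) i j
      = (((n.factorial : ℂ))⁻¹ • t ^ n • P ^ n) i j
    rw [Matrix.smul_apply, Matrix.smul_apply, smul_eq_mul, smul_eq_mul]
    ring
  -- the trace picks the (i0, iL) entry
  have htr : Matrix.trace (Pi * exp (t • P)) = (exp (t • P)) i0 iL := by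
    set E := exp (t • P) with hE
    rw [Matrix.trace]
    have hdiag : ∀ i : Fin N, Matrix.diag (Pi * E) i = if i = iL then E i0 iL else 0 := by
      intro i
      rw [Matrix.diag_apply, Matrix.mul_apply]
      have h2 : ∀ k : Fin N, Pi i k * E k i = if i = iL ∧ k = i0 then E i0 iL else 0 := by
        intro k
        rw [hPi i k]
        by_cases h : i = iL ∧ k = i0
        · obtain ⟨ha, hb⟩ := h; subst ha; subst hb
          rw [if_pos ⟨hiLv, hi0v⟩, if_pos ⟨rfl, rfl⟩, one_mul]
        · have h' : ¬ ((i : ℕ) = N - 1 ∧ (k : ℕ) = 0) := by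
            intro hc
            exact h ⟨Fin.ext (hc.1.trans hiLv.symm), Fin.ext (hc.2.trans hi0v.symm)⟩
          rw [if_neg h', zero_mul, if_neg h]
      rw [Finset.sum_congr rfl fun k _ => h2 k]
      by_cases hi : i = iL
      · subst hi
        simp [Finset.sum_ite_eq']
      · simp [hi]
    rw [Finset.sum_congr rfl fun i _ => hdiag i, Finset.sum_ite_eq' Finset.univ iL,
      if_pos (Finset.mem_univ _)]
  have hEe : (exp (t • P)) i0 iL
      = ∑' n : ℕ, ((n.factorial : ℂ))⁻¹ * t ^ n * (P ^ n) i0 iL := by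
    rw [exp_eq_tsum ℂ]
    show (∑' n : ℕ, ((n.factorial : ℂ))⁻¹ • (t • P) ^ n) i0 iL = _
    erw [tsum_apply hsm, tsum_apply (_root_.Pi.summable.mp hsm i0)]
    refine tsum_congr fun n => ?_
    rw [smul_pow]
    show (((n.factorial : ℂ))⁻¹ • t ^ n • P ^ n) i0 iL
      = ((n.factorial : ℂ))⁻¹ * t ^ n * (P ^ n) i0 iL
    rw [Matrix.smul_apply, Matrix.smul_apply, smul_eq_mul, smul_eq_mul]
    ring
  -- rewrite the right-hand side as a power series
  have hexp : ∀ j : Fin N, p j * Complex.exp (t * p j)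
      = ∑' n : ℕ, ((n.factorial : ℂ))⁻¹ * t ^ n * p j ^ (n + 1) := by
    intro j
    rw [Complex.exp_eq_exp_ℂ, exp_eq_tsum ℂ, ← tsum_mul_left]
    refine tsum_congr fun n => ?_
    rw [smul_eq_mul, mul_pow]; ring
  have hsumj : ∀ j : Fin N,
      Summable (fun n : ℕ => ((n.factorial : ℂ))⁻¹ * t ^ n * p j ^ (n + 1)) := by
    intro j
    apply ((expSeries_summable' (𝕂 := ℂ) (t * p j)).mul_left (p j)).congr
    intro n
    rw [smul_eq_mul, mul_pow]; ring
  have hRHS : ∑ j : Fin N, p j * Complex.exp (t * p j)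
      = ∑' n : ℕ, ((n.factorial : ℂ))⁻¹ * t ^ n * ∑ j : Fin N, p j ^ (n + 1) := by
    rw [Finset.sum_congr rfl fun j _ => hexp j, ← Summable.tsum_finsetSum (fun j _ => hsumj j)]
    exact tsum_congr fun n => by rw [Finset.mul_sum]
  rw [htr, hEe, hRHS, ← tsum_mul_left]
  refine tsum_congr fun n => ?_
  rw [hpent n i0 iL, power_sum N hN lam hlam p hinj hroot (n + 1), hi0v, hiLv, zero_add]
  by_cases hd : N ∣ (n + 1)
  · obtain ⟨k, hk⟩ := hd
    obtain ⟨hmod, hdivk⟩ := nat_dvd_facts N n k hN hk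
    have hdiv : (n + 1) / N = n / N + 1 := by
      rw [hk, Nat.mul_div_cancel_left _ (by omega : 0 < N)]; omega
    rw [if_pos hmod, if_pos ⟨k, hk⟩, hdiv, pow_succ]
    have hNL : ((N : ℂ) * lam) ≠ 0 := mul_ne_zero hNC hlam
    rw [one_div_mul_eq_div, eq_div_iff hNL]
    ring
  · have hmod : n % N ≠ N - 1 := by
      intro h
      apply hd
      refine ⟨n / N + 1, ?_⟩
      have h1 : N * (n / N + 1) = N * (n / N) + N := by ring
      have h2 := Nat.div_add_mod n N
      omega
    rw [if_neg hmod, if_neg hd]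
    simp
end
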